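/- Let u(x) = Σ_{k=1}^∞ ε_k r_k² u_{t_k}((x − R_k ζ₀)/r_k), where u_t is the cutoff function from the construction (supported in {|x| ≤ 2/3}), the balls B_k = {|x − R_kζ₀| ≤ (2/3)r_k} are pairwise disjoint, ε_k > 0 with ε_k → 0, and 0 < t_k < 1/4 with t_k → 0. Then u is differentiable at 0 with Du(0) = 0, and moreover each first partial ∂u/∂x_j is differentiable at 0 with all second partials of u at 0 equal to 0; that is, u is twice differentiable at the origin. -/

import Mathlib

open Real Filter Metric Set Classical

lemma aux_xexp (x : ℝ) : x * Real.exp (-x) ≤ 1 := by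
  have h1 : x ≤ Real.exp x := le_trans (by linarith) (Real.add_one_le_exp x)
  have h2 : 0 < Real.exp (-x) := Real.exp_pos _
  calc x * Real.exp (-x) ≤ Real.exp x * Real.exp (-x) := by nlinarith
    _ = 1 := by rw [← Real.exp_add]; simp

lemma aux_phi (φ : ℝ → ℝ) (hφs : ContDiffOn ℝ 2 φ (Set.Ioi 0))
    (hφ' : Tendsto (deriv φ) atTop (nhds 0)) (s₀ : ℝ) (hs₀ : 0 < s₀) :
    ∃ A B : ℝ, 0 ≤ A ∧ 0 ≤ B ∧ ∀ s, s₀ ≤ s → |deriv φ s| ≤ B ∧ |φ s| ≤ A + B * s := by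
  have hdiff : ∀ x ∈ Set.Ici s₀, DifferentiableAt ℝ φ x := by
    intro x hx
    exact (hφs.differentiableOn (by norm_num)).differentiableAt
      (isOpen_Ioi.mem_nhds (lt_of_lt_of_le hs₀ hx))
  have hcont : ContinuousOn (deriv φ) (Set.Ioi 0) :=
    hφs.continuousOn_deriv_of_isOpen isOpen_Ioi (by norm_num)
  have h1 : ∀ᶠ s in atTop, |deriv φ s| ≤ 1 := by
    have := Metric.tendsto_nhds.mp hφ' 1 one_pos
    exact this.mono (fun s hs => by simpa [Real.dist_eq] using hs.le)
  obtain ⟨M, hM⟩ := eventually_atTop.mp h1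
  obtain ⟨B₀, hB₀⟩ := (isCompact_Icc (a := s₀) (b := max M s₀)).exists_bound_of_continuousOn
    (hcont.mono (fun x hx => lt_of_lt_of_le hs₀ hx.1))
  set B := max B₀ 1 with hB
  have hBnn : 0 ≤ B := le_trans zero_le_one (le_max_right _ _)
  have hderB : ∀ s, s₀ ≤ s → |deriv φ s| ≤ B := by
    intro s hs
    rcases le_or_gt s (max M s₀) with h | h
    · exact le_trans (by simpa using hB₀ s ⟨hs, h⟩) (le_max_left _ _)
    · exact le_trans (hM s (le_trans (le_max_left _ _) h.le)) (le_max_right _ _)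
  refine ⟨|φ s₀|, B, abs_nonneg _, hBnn, fun s hs => ⟨hderB s hs, ?_⟩⟩
  have := Convex.norm_image_sub_le_of_norm_deriv_le hdiff
    (fun x hx => by simpa using hderB x hx) (convex_Ici s₀) (Set.mem_Ici.mpr le_rfl) hs
  simp only [Real.norm_eq_abs] at this
  have habs : |φ s| - |φ s₀| ≤ |φ s - φ s₀| := by
    have := abs_sub_abs_le_abs_sub (φ s) (φ s₀); linarith
  have h0 : 0 ≤ B * s₀ := mul_nonneg hBnn hs₀.le
  have : |φ s - φ s₀| ≤ B * (s - s₀) := by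
    calc |φ s - φ s₀| ≤ B * |s - s₀| := this
      _ = B * (s - s₀) := by rw [abs_of_nonneg (by linarith)]
  nlinarith

noncomputable def auxh (η φ : ℝ → ℝ) (τ : ℝ) (ρ : ℝ) : ℝ :=
  η ρ * (ρ ^ (2*τ) * φ (-Real.log (ρ^(2:ℕ))))

lemma auxh_zero (η φ : ℝ → ℝ) (hη0 : ∀ s : ℝ, 2/3 ≤ s → η s = 0) (τ ρ : ℝ)
    (h : 2/3 ≤ ρ) : auxh η φ τ ρ = 0 := by
  simp [auxh, hη0 ρ h]

set_option maxHeartbeats 1000000 in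
lemma auxh_main (η φ : ℝ → ℝ)
    (hφsmooth : ContDiffOn ℝ 2 φ (Set.Ioi 0))
    (hφ' : Tendsto (deriv φ) atTop (nhds 0))
    (hηsmooth : ContDiff ℝ (⊤ : ℕ∞) η)
    (hηrange : ∀ s : ℝ, 0 ≤ s → η s ∈ Set.Icc (0:ℝ) 1)
    (hη0 : ∀ s : ℝ, 2/3 ≤ s → η s = 0) :
    ∃ C₁ C₂ : ℝ, 0 ≤ C₁ ∧ 0 ≤ C₂ ∧ ∀ τ ∈ Set.Ioo (0:ℝ) (1/4), ∀ ρ : ℝ, 0 < ρ →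
      DifferentiableAt ℝ (auxh η φ τ) ρ ∧
      ρ ^ 2 * |deriv (auxh η φ τ) ρ| ≤ C₂ ∧
      (ρ ≤ 2/3 → ρ * |auxh η φ τ ρ| ≤ C₁ * (ρ + Real.sqrt ρ)) := by
  have hs₀ : (0:ℝ) < Real.log (9/4) := Real.log_pos (by norm_num)
  obtain ⟨A, B, hA, hB, hφbnd⟩ := aux_phi φ hφsmooth hφ' (Real.log (9/4)) hs₀
  have hηd : Differentiable ℝ η := hηsmooth.differentiable (by simp)
  have hηcont' : Continuous (deriv η) := hηsmooth.continuous_deriv (by simp)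
  obtain ⟨Cη, hCη⟩ := (isCompact_Icc (a := (0:ℝ)) (b := 1)).exists_bound_of_continuousOn
    hηcont'.continuousOn
  have hCηnn : 0 ≤ Cη := le_trans (norm_nonneg _) (hCη 0 (by norm_num))
  refine ⟨A + 4*B, Cη*(A + 2*B) + A + 4*B, by positivity, by positivity, ?_⟩
  rintro τ ⟨hτ0, hτ4⟩ ρ hρ
  by_cases hρ23 : ρ ≤ 2/3
  · -- main case : ρ ∈ (0, 2/3]
    have hρ1 : ρ < 1 := by linarith
    set s : ℝ := -Real.log (ρ^(2:ℕ)) with hsdef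
    have hs2 : s = -(2 * Real.log ρ) := by
      rw [hsdef, Real.log_pow]; push_cast; ring
    have hss₀ : Real.log (9/4) ≤ s := by
      have h23 : Real.log ρ ≤ Real.log (2/3) := Real.log_le_log hρ hρ23
      have h94 : Real.log (9/4) = -(2 * Real.log (2/3)) := by
        rw [show (9:ℝ)/4 = ((2:ℝ)/3)^(-2 : ℤ) by norm_num]
        rw [Real.log_zpow]; push_cast; ring
      rw [hs2, h94]; linarith
    have hspos : 0 < s := lt_of_lt_of_le hs₀ hss₀
    obtain ⟨hφ's, hφs1⟩ := hφbnd s hss₀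
    -- rpow as exp
    have hrpow_exp : ρ ^ (2*τ) = Real.exp (-(τ * s)) := by
      rw [Real.rpow_def_of_pos hρ]
      congr 1
      rw [hs2]; ring
    have hρexp : ρ = Real.exp (-(s/2)) := by
      rw [hs2, show -(-(2 * Real.log ρ) / 2) = Real.log ρ by ring, Real.exp_log hρ]
    have hsqrtexp : Real.sqrt ρ = Real.exp (-(s/4)) := by
      rw [Real.sqrt_eq_rpow, Real.rpow_def_of_pos hρ]
      congr 1
      rw [hs2]; ring
    -- numeric facts
    have hP1 : ρ ^ (2*τ) ≤ 1 := by
      rw [hrpow_exp]; exact Real.exp_le_one_iff.mpr (by nlinarith)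
    have hP0 : 0 ≤ ρ ^ (2*τ) := Real.rpow_nonneg hρ.le _
    have hρs : ρ * s ≤ 2 := by
      have := aux_xexp (s/2)
      rw [hρexp]; nlinarith
    have hsqs : Real.sqrt ρ * s ≤ 4 := by
      have := aux_xexp (s/4)
      rw [hsqrtexp]; nlinarith
    have hτse : τ * s * ρ ^ (2*τ) ≤ 1 := by
      rw [hrpow_exp]; exact aux_xexp (τ*s)
    have hηρ : |η ρ| ≤ 1 := by
      obtain ⟨h0, h1⟩ := hηrange ρ hρ.le
      rw [abs_of_nonneg h0]; exact h1
    have hη'b : |deriv η ρ| ≤ Cη := by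
      simpa [Real.norm_eq_abs] using hCη ρ ⟨hρ.le, by linarith⟩
    -- value bound
    have hhabs : |auxh η φ τ ρ| ≤ A + B * s := by
      rw [auxh, ← hsdef, abs_mul, abs_mul, abs_of_nonneg hP0]
      calc |η ρ| * (ρ ^ (2*τ) * |φ s|) ≤ 1 * (1 * (A + B * s)) := by
            apply mul_le_mul hηρ _ (by positivity) zero_le_one
            apply mul_le_mul hP1 hφs1 (abs_nonneg _) zero_le_one
        _ = A + B * s := by ring
    -- derivative formula
    have hppos : (0:ℝ) < ρ^(2:ℕ) := by positivity
    have hlogd : HasDerivAt (fun x : ℝ => -Real.log (x^(2:ℕ))) (-(2/ρ)) ρ := by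
      have h1 : HasDerivAt (fun x : ℝ => x^(2:ℕ)) ((2:ℕ) * ρ^(2-1)) ρ := hasDerivAt_pow 2 ρ
      have h2 := (h1.log (ne_of_gt hppos)).fun_neg
      refine h2.congr_deriv ?_
      rw [neg_inj, Nat.cast_ofNat, pow_one]
      field_simp
    have hφdiff : HasDerivAt φ (deriv φ s) s :=
      (((hφsmooth.differentiableOn (by norm_num)).differentiableAt
        (isOpen_Ioi.mem_nhds hspos))).hasDerivAt
    have hcomp : HasDerivAt (fun x : ℝ => φ (-Real.log (x^(2:ℕ)))) (deriv φ s * -(2/ρ)) ρ :=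
      hφdiff.comp ρ hlogd
    have hrpowd : HasDerivAt (fun x : ℝ => x ^ (2*τ)) (2*τ * ρ^(2*τ - 1)) ρ :=
      Real.hasDerivAt_rpow_const (Or.inl hρ.ne')
    have hGd : HasDerivAt (fun x : ℝ => x^(2*τ) * φ (-Real.log (x^(2:ℕ))))
        (2*τ * ρ^(2*τ-1) * φ s + ρ^(2*τ) * (deriv φ s * -(2/ρ))) ρ := hrpowd.mul hcomp
    have hηd' : HasDerivAt η (deriv η ρ) ρ := (hηd ρ).hasDerivAt
    have hHd : HasDerivAt (auxh η φ τ)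
        (deriv η ρ * (ρ^(2*τ) * φ s) +
          η ρ * (2*τ * ρ^(2*τ-1) * φ s + ρ^(2*τ) * (deriv φ s * -(2/ρ)))) ρ := hηd'.mul hGd
    have hQ : ρ^(2*τ-1) = ρ^(2*τ)/ρ := by
      rw [Real.rpow_sub hρ, Real.rpow_one]
    refine ⟨hHd.differentiableAt, ?_, ?_⟩
    · -- derivative bound
      have key : ρ^2 * deriv (auxh η φ τ) ρ =
          deriv η ρ * (ρ^2 * ρ^(2*τ) * φ s) +
          η ρ * (2*τ*ρ*(ρ^(2*τ))*φ s - 2*ρ*(ρ^(2*τ))*deriv φ s) := by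
        rw [hHd.deriv, hQ]; field_simp; ring
      have hρ2le1 : ρ^2 ≤ 1 := by nlinarith
      have hρρs : ρ*(ρ*s) ≤ 2 := by nlinarith [mul_nonneg hρ.le hspos.le]
      have f1 : ρ^2 * ρ^(2*τ) * |φ s| ≤ A + 2*B := by
        have h1 : ρ^2 * ρ^(2*τ) * |φ s| ≤ ρ^2 * 1 * (A + B*s) := by
          apply mul_le_mul _ hφs1 (abs_nonneg _) (by positivity)
          apply mul_le_mul_of_nonneg_left hP1 (by positivity)
        nlinarith [h1, hρ2le1, hρρs, hA, hB]
      have hτnn : (0:ℝ) ≤ 2*τ*ρ*(ρ^(2*τ)) :=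
        mul_nonneg (mul_nonneg (mul_nonneg (by norm_num) hτ0.le) hρ.le) hP0
      have f2 : 2*τ*ρ*(ρ^(2*τ))*|φ s| ≤ A/2 + 2*B := by
        have h1 : 2*τ*ρ*(ρ^(2*τ))*|φ s| ≤ 2*τ*ρ*(ρ^(2*τ))*(A + B*s) :=
          mul_le_mul_of_nonneg_left hφs1 hτnn
        have h2 : 2*τ*ρ*(ρ^(2*τ))*(A + B*s) = 2*ρ*(A*(τ*ρ^(2*τ))) + 2*ρ*(B*(τ*s*ρ^(2*τ))) := by
          ring
        have h3 : τ*ρ^(2*τ) ≤ 1/4 := by nlinarith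
        have gA : A*(τ*ρ^(2*τ)) ≤ A*(1/4) := mul_le_mul_of_nonneg_left h3 hA
        have gB : B*(τ*s*ρ^(2*τ)) ≤ B*1 := mul_le_mul_of_nonneg_left hτse hB
        have gAnn : 0 ≤ A*(τ*ρ^(2*τ)) := mul_nonneg hA (mul_nonneg hτ0.le hP0)
        have gBnn : 0 ≤ B*(τ*s*ρ^(2*τ)) :=
          mul_nonneg hB (mul_nonneg (mul_nonneg hτ0.le hspos.le) hP0)
        have gA2 : 2*ρ*(A*(τ*ρ^(2*τ))) ≤ 2*1*(A*(1/4)) :=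
          mul_le_mul (by linarith) gA gAnn (by norm_num)
        have gB2 : 2*ρ*(B*(τ*s*ρ^(2*τ))) ≤ 2*1*(B*1) :=
          mul_le_mul (by linarith) gB gBnn (by norm_num)
        linarith
      have f3 : 2*ρ*(ρ^(2*τ))*|deriv φ s| ≤ 2*B := by
        have h1 : 2*ρ*(ρ^(2*τ)) ≤ 2 := by nlinarith
        exact le_trans (mul_le_mul h1 hφ's (abs_nonneg _) (by norm_num)) (by linarith)
      have htri : |ρ^2 * deriv (auxh η φ τ) ρ| ≤
          Cη * (ρ^2 * ρ^(2*τ) * |φ s|) +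
          1 * (2*τ*ρ*(ρ^(2*τ))*|φ s| + 2*ρ*(ρ^(2*τ))*|deriv φ s|) := by
        rw [key]
        calc |deriv η ρ * (ρ^2 * ρ^(2*τ) * φ s) +
              η ρ * (2*τ*ρ*(ρ^(2*τ))*φ s - 2*ρ*(ρ^(2*τ))*deriv φ s)|
            ≤ |deriv η ρ * (ρ^2 * ρ^(2*τ) * φ s)| +
              |η ρ * (2*τ*ρ*(ρ^(2*τ))*φ s - 2*ρ*(ρ^(2*τ))*deriv φ s)| := abs_add_le _ _
          _ ≤ Cη * (ρ^2 * ρ^(2*τ) * |φ s|) +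
              1 * (2*τ*ρ*(ρ^(2*τ))*|φ s| + 2*ρ*(ρ^(2*τ))*|deriv φ s|) := by
              apply add_le_add
              · rw [abs_mul]
                apply mul_le_mul hη'b _ (abs_nonneg _) hCηnn
                rw [abs_mul, abs_mul, abs_of_nonneg (by positivity : (0:ℝ) ≤ ρ^2),
                  abs_of_nonneg hP0]
              · rw [abs_mul]
                apply mul_le_mul hηρ _ (abs_nonneg _) zero_le_one
                have e1 : |2*τ*ρ*(ρ^(2*τ))*φ s| = 2*τ*ρ*(ρ^(2*τ))*|φ s| := by
                  rw [abs_mul, abs_of_nonneg hτnn]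
                have e2 : |2*ρ*(ρ^(2*τ))*deriv φ s| = 2*ρ*(ρ^(2*τ))*|deriv φ s| := by
                  rw [abs_mul, abs_of_nonneg (by positivity)]
                calc |2*τ*ρ*(ρ^(2*τ))*φ s - 2*ρ*(ρ^(2*τ))*deriv φ s|
                    ≤ |2*τ*ρ*(ρ^(2*τ))*φ s| + |2*ρ*(ρ^(2*τ))*deriv φ s| := abs_sub _ _
                  _ = 2*τ*ρ*(ρ^(2*τ))*|φ s| + 2*ρ*(ρ^(2*τ))*|deriv φ s| := by rw [e1, e2]
          
      have hfin : ρ^2 * |deriv (auxh η φ τ) ρ| = |ρ^2 * deriv (auxh η φ τ) ρ| := by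
        rw [abs_mul, abs_of_nonneg (by positivity : (0:ℝ) ≤ ρ^2)]
      rw [hfin]
      calc |ρ^2 * deriv (auxh η φ τ) ρ| ≤ Cη * (ρ^2 * ρ^(2*τ) * |φ s|) +
            1 * (2*τ*ρ*(ρ^(2*τ))*|φ s| + 2*ρ*(ρ^(2*τ))*|deriv φ s|) := htri
        _ ≤ Cη * (A + 2*B) + 1 * ((A/2 + 2*B) + 2*B) := by
            apply add_le_add
            · exact mul_le_mul_of_nonneg_left f1 hCηnn
            · exact mul_le_mul_of_nonneg_left (add_le_add f2 f3) zero_le_one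
        _ ≤ Cη*(A + 2*B) + A + 4*B := by linarith
    · -- value bound
      intro _
      have hsplit : ρ * s ≤ 4 * Real.sqrt ρ := by
        have hsq : Real.sqrt ρ * Real.sqrt ρ = ρ := Real.mul_self_sqrt hρ.le
        nlinarith [Real.sqrt_nonneg ρ, hspos.le, hsqs]
      have : ρ * |auxh η φ τ ρ| ≤ ρ * (A + B * s) :=
        mul_le_mul_of_nonneg_left hhabs hρ.le
      have hfin : ρ * (A + B*s) ≤ (A + 4*B) * (ρ + Real.sqrt ρ) := by
        have h1 : ρ * (A + B*s) = A * ρ + B * (ρ * s) := by ring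
        nlinarith [Real.sqrt_nonneg ρ, mul_nonneg hB (Real.sqrt_nonneg ρ)]
      linarith
  · -- ρ > 2/3 : locally zero
    push_neg at hρ23
    have hev : auxh η φ τ =ᶠ[nhds ρ] (fun _ => (0:ℝ)) := by
      filter_upwards [isOpen_Ioi.mem_nhds (show (2/3:ℝ) < ρ from hρ23)] with x hx
      exact auxh_zero η φ hη0 τ x (le_of_lt hx)
    have hdiff : DifferentiableAt ℝ (auxh η φ τ) ρ :=
      (differentiableAt_const (0:ℝ)).congr_of_eventuallyEq hev
    have hder : deriv (auxh η φ τ) ρ = 0 := by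
      rw [Filter.EventuallyEq.deriv_eq hev, deriv_const]
    refine ⟨hdiff, ?_, fun h => absurd h (not_le.mpr hρ23)⟩
    rw [hder]; simp; positivity



noncomputable def auxv (η φ : ℝ → ℝ) {n : ℕ} (i0 i1 : Fin n) (τ : ℝ)
    (y : EuclideanSpace ℝ (Fin n)) : ℝ :=
  y i0 * y i1 * auxh η φ τ ‖y‖

lemma coord_le_norm {n : ℕ} (v : EuclideanSpace ℝ (Fin n)) (i : Fin n) : |v i| ≤ ‖v‖ := by
  calc |v i| = Real.sqrt (‖v i‖^2) := by
        rw [Real.norm_eq_abs, sq_abs, Real.sqrt_sq_eq_abs]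
    _ ≤ Real.sqrt (∑ j, ‖v j‖^2) := Real.sqrt_le_sqrt
        (Finset.single_le_sum (f := fun j => ‖v j‖^2) (fun j _ => by positivity)
          (Finset.mem_univ i))
    _ = ‖v‖ := (EuclideanSpace.norm_eq v).symm

lemma const_coord_norm_lb {n : ℕ} (hn : 2 ≤ n) (d : ℝ) (v : EuclideanSpace ℝ (Fin n))
    (hv : ∀ i, v i = d / Real.sqrt 2) : |d| ≤ ‖v‖ := by
  have h2 : Real.sqrt 2 ^ 2 = 2 := Real.sq_sqrt (by norm_num)
  have i0 : Fin n := ⟨0, by omega⟩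
  rw [EuclideanSpace.norm_eq]
  rw [show |d| = Real.sqrt (d^2) by rw [Real.sqrt_sq_eq_abs]]
  apply Real.sqrt_le_sqrt
  have hsub : ({⟨0, by omega⟩, ⟨1, by omega⟩} : Finset (Fin n)) ⊆ Finset.univ :=
    Finset.subset_univ _
  have hne : (⟨0, by omega⟩ : Fin n) ≠ ⟨1, by omega⟩ := by
    simp [Fin.ext_iff]
  have hval : ∀ i : Fin n, ‖v i‖^2 = d^2/2 := by
    intro i
    rw [Real.norm_eq_abs, sq_abs, hv i, div_pow, h2]
  calc d^2 = d^2/2 + d^2/2 := by ring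
    _ = ∑ i ∈ ({⟨0, by omega⟩, ⟨1, by omega⟩} : Finset (Fin n)), ‖v i‖^2 := by
        rw [Finset.sum_pair hne, hval, hval]
    _ ≤ ∑ i, ‖v i‖^2 := Finset.sum_le_sum_of_subset_of_nonneg hsub
        (fun j _ _ => by positivity)

lemma const_coord_norm_ub {n : ℕ} (d : ℝ) (v : EuclideanSpace ℝ (Fin n))
    (hv : ∀ i, v i = d / Real.sqrt 2) : ‖v‖ ≤ n * |d| := by
  have h2 : Real.sqrt 2 ^ 2 = 2 := Real.sq_sqrt (by norm_num)
  rw [EuclideanSpace.norm_eq]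
  have hval : ∀ i : Fin n, ‖v i‖^2 = d^2/2 := by
    intro i
    rw [Real.norm_eq_abs, sq_abs, hv i, div_pow, h2]
  have : ∑ i : Fin n, ‖v i‖^2 = n * (d^2/2) := by
    rw [Finset.sum_congr rfl (fun i _ => hval i)]
    simp [Finset.card_univ, mul_comm]
  rw [this]
  rw [show (n:ℝ) * |d| = Real.sqrt ((n * |d|)^2) by
    rw [Real.sqrt_sq (by positivity)]]
  apply Real.sqrt_le_sqrt
  have : (↑n * |d|)^2 = n^2 * d^2 := by rw [mul_pow, sq_abs]
  rw [this]
  rcases Nat.eq_zero_or_pos n with h | h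
  · subst h; simp
  · have h1 : (1:ℝ) ≤ n := by exact_mod_cast h
    nlinarith [sq_nonneg d]

lemma auxv_zero_at_zero (η φ : ℝ → ℝ) {n : ℕ} (i0 i1 : Fin n) (τ : ℝ) :
    auxv η φ i0 i1 τ 0 = 0 := by
  simp [auxv]

lemma auxv_hasFDerivAt (η φ : ℝ → ℝ) {n : ℕ} (i0 i1 : Fin n) (τ : ℝ) (C₁ C₂ : ℝ)
    (hC₁ : 0 ≤ C₁) (hC₂ : 0 ≤ C₂)
    (hmain : ∀ ρ : ℝ, 0 < ρ →
      DifferentiableAt ℝ (auxh η φ τ) ρ ∧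
      ρ ^ 2 * |deriv (auxh η φ τ) ρ| ≤ C₂ ∧
      (ρ ≤ 2/3 → ρ * |auxh η φ τ ρ| ≤ C₁ * (ρ + Real.sqrt ρ)))
    (hzero : ∀ ρ : ℝ, 2/3 ≤ ρ → auxh η φ τ ρ = 0)
    (y : EuclideanSpace ℝ (Fin n)) (hy : y ≠ 0) :
    ∃ D : EuclideanSpace ℝ (Fin n) →L[ℝ] ℝ,
      HasFDerivAt (auxv η φ i0 i1 τ) D y ∧ ‖D‖ ≤ C₂ + 4*C₁ := by
  set ρ := ‖y‖ with hρdef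
  have hρ : 0 < ρ := norm_pos_iff.mpr hy
  obtain ⟨hdiff, hd2, hval⟩ := hmain ρ hρ
  -- plain bound for ρ * |h|
  have hρh : ρ * |auxh η φ τ ρ| ≤ 2*C₁ := by
    by_cases h23 : ρ ≤ 2/3
    · have h1 := hval h23
      have hsq : Real.sqrt ρ ≤ 1 := by
        rw [show (1:ℝ) = Real.sqrt 1 by simp]
        exact Real.sqrt_le_sqrt (by linarith)
      nlinarith [Real.sqrt_nonneg ρ]
    · rw [hzero ρ (by linarith)]
      simp
      positivity
  -- derivative of the norm
  have hNd : DifferentiableAt ℝ (fun z : EuclideanSpace ℝ (Fin n) => ‖z‖) y :=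
    (contDiffAt_norm ℝ (n := 1) hy).differentiableAt (by norm_num)
  set N := fderiv ℝ (fun z : EuclideanSpace ℝ (Fin n) => ‖z‖) y with hNdef
  have hN : HasFDerivAt (fun z : EuclideanSpace ℝ (Fin n) => ‖z‖) N y := hNd.hasFDerivAt
  have hNle : ‖N‖ ≤ 1 := by
    have := norm_fderiv_le_of_lipschitz ℝ (lipschitzWith_one_norm
      (E := EuclideanSpace ℝ (Fin n))) (x₀ := y)
    simpa using this
  have hcomp : HasFDerivAt (fun z : EuclideanSpace ℝ (Fin n) => auxh η φ τ ‖z‖)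
      (deriv (auxh η φ τ) ρ • N) y :=
    hdiff.hasDerivAt.comp_hasFDerivAt (h₂ := auxh η φ τ) y hN
  have hp0 : HasFDerivAt (fun z : EuclideanSpace ℝ (Fin n) => z i0)
      (EuclideanSpace.proj i0 : EuclideanSpace ℝ (Fin n) →L[ℝ] ℝ) y :=
    ((EuclideanSpace.proj i0 : EuclideanSpace ℝ (Fin n) →L[ℝ] ℝ).hasFDerivAt).congr_of_eventuallyEq
      (Filter.Eventually.of_forall fun z => rfl)
  have hp1 : HasFDerivAt (fun z : EuclideanSpace ℝ (Fin n) => z i1)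
      (EuclideanSpace.proj i1 : EuclideanSpace ℝ (Fin n) →L[ℝ] ℝ) y :=
    ((EuclideanSpace.proj i1 : EuclideanSpace ℝ (Fin n) →L[ℝ] ℝ).hasFDerivAt).congr_of_eventuallyEq
      (Filter.Eventually.of_forall fun z => rfl)
  have hp01 := hp0.mul hp1
  have hD := hp01.mul hcomp
  refine ⟨_, hD, ?_⟩
  -- norm bound
  have hb1 : ‖(y i0 * y i1) • (deriv (auxh η φ τ) ρ • N)‖ ≤ C₂ := by
    have e0 : ‖(y i0 * y i1) • (deriv (auxh η φ τ) ρ • N)‖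
        = ‖y i0 * y i1‖ * ‖deriv (auxh η φ τ) ρ • N‖ := norm_smul _ _
    have e1 : ‖deriv (auxh η φ τ) ρ • N‖ = ‖deriv (auxh η φ τ) ρ‖ * ‖N‖ := norm_smul _ _
    rw [e0, e1]
    have h1 : |y i0 * y i1| ≤ ρ^2 := by
      rw [abs_mul]
      have := coord_le_norm y i0
      have := coord_le_norm y i1
      nlinarith [abs_nonneg (y i0), abs_nonneg (y i1)]
    have h2 : ‖deriv (auxh η φ τ) ρ‖ * ‖N‖ ≤ |deriv (auxh η φ τ) ρ| * 1 := by
      rw [Real.norm_eq_abs]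
      exact mul_le_mul_of_nonneg_left hNle (abs_nonneg _)
    calc ‖y i0 * y i1‖ * (‖deriv (auxh η φ τ) ρ‖ * ‖N‖)
        ≤ ρ^2 * (|deriv (auxh η φ τ) ρ| * 1) :=
          mul_le_mul (by rwa [Real.norm_eq_abs]) h2 (by positivity) (by positivity)
      _ = ρ^2 * |deriv (auxh η φ τ) ρ| := by ring
      _ ≤ C₂ := hd2
  have hb2 : ‖auxh η φ τ ρ • (y i0 • (EuclideanSpace.proj i1 : EuclideanSpace ℝ (Fin n) →L[ℝ] ℝ)
      + y i1 • (EuclideanSpace.proj i0 : EuclideanSpace ℝ (Fin n) →L[ℝ] ℝ))‖ ≤ 4*C₁ := by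
    rw [norm_smul (auxh η φ τ ρ) (y i0 • (EuclideanSpace.proj i1 : EuclideanSpace ℝ (Fin n) →L[ℝ] ℝ)
      + y i1 • (EuclideanSpace.proj i0 : EuclideanSpace ℝ (Fin n) →L[ℝ] ℝ))]
    have hcombo : ‖y i0 • (EuclideanSpace.proj i1 : EuclideanSpace ℝ (Fin n) →L[ℝ] ℝ)
        + y i1 • (EuclideanSpace.proj i0 : EuclideanSpace ℝ (Fin n) →L[ℝ] ℝ)‖ ≤ 2*ρ := by
      apply ContinuousLinearMap.opNorm_le_bound _ (by positivity)
      intro v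
      have hv0 := coord_le_norm v i0
      have hv1 := coord_le_norm v i1
      have hy0 := coord_le_norm y i0
      have hy1 := coord_le_norm y i1
      simp only [ContinuousLinearMap.add_apply, ContinuousLinearMap.smul_apply,
        smul_eq_mul, Real.norm_eq_abs]
      show |y i0 * v i1 + y i1 * v i0| ≤ 2*ρ*‖v‖
      calc |y i0 * v i1 + y i1 * v i0| ≤ |y i0 * v i1| + |y i1 * v i0| := abs_add_le _ _
        _ = |y i0| * |v i1| + |y i1| * |v i0| := by rw [abs_mul, abs_mul]
        _ ≤ ρ * ‖v‖ + ρ * ‖v‖ := by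
            apply add_le_add
            · exact mul_le_mul hy0 hv1 (abs_nonneg _) hρ.le
            · exact mul_le_mul hy1 hv0 (abs_nonneg _) hρ.le
        _ = 2*ρ*‖v‖ := by ring
    calc ‖auxh η φ τ ρ‖ * ‖y i0 • (EuclideanSpace.proj i1 : EuclideanSpace ℝ (Fin n) →L[ℝ] ℝ)
          + y i1 • (EuclideanSpace.proj i0 : EuclideanSpace ℝ (Fin n) →L[ℝ] ℝ)‖
        ≤ |auxh η φ τ ρ| * (2*ρ) := by
          rw [Real.norm_eq_abs]
          exact mul_le_mul_of_nonneg_left hcombo (abs_nonneg _)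
      _ = 2*(ρ * |auxh η φ τ ρ|) := by ring
      _ ≤ 2*(2*C₁) := by linarith
      _ = 4*C₁ := by ring
  calc ‖(y i0 * y i1) • (deriv (auxh η φ τ) ρ • N) +
        auxh η φ τ ρ • (y i0 • (EuclideanSpace.proj i1 : EuclideanSpace ℝ (Fin n) →L[ℝ] ℝ)
        + y i1 • (EuclideanSpace.proj i0 : EuclideanSpace ℝ (Fin n) →L[ℝ] ℝ))‖
      ≤ ‖(y i0 * y i1) • (deriv (auxh η φ τ) ρ • N)‖ +
        ‖auxh η φ τ ρ • (y i0 • (EuclideanSpace.proj i1 : EuclideanSpace ℝ (Fin n) →L[ℝ] ℝ)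
        + y i1 • (EuclideanSpace.proj i0 : EuclideanSpace ℝ (Fin n) →L[ℝ] ℝ))‖ := norm_add_le _ _
    _ ≤ C₂ + 4*C₁ := add_le_add hb1 hb2


lemma auxv_abs_le (η φ : ℝ → ℝ) {n : ℕ} (i0 i1 : Fin n) (τ : ℝ)
    (y : EuclideanSpace ℝ (Fin n)) :
    |auxv η φ i0 i1 τ y| ≤ ‖y‖ * (‖y‖ * |auxh η φ τ ‖y‖|) := by
  unfold auxv
  rw [abs_mul, abs_mul]
  calc |y i0| * |y i1| * |auxh η φ τ ‖y‖|
      ≤ (‖y‖ * ‖y‖) * |auxh η φ τ ‖y‖| := by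
        apply mul_le_mul_of_nonneg_right _ (abs_nonneg _)
        exact mul_le_mul (coord_le_norm y i0) (coord_le_norm y i1) (abs_nonneg _) (norm_nonneg _)
    _ = ‖y‖ * (‖y‖ * |auxh η φ τ ‖y‖|) := by ring

lemma auxv_hasFDerivAt_zero (η φ : ℝ → ℝ) {n : ℕ} (i0 i1 : Fin n) (τ C₁ : ℝ) (hC₁ : 0 ≤ C₁)
    (hval : ∀ ρ : ℝ, 0 < ρ → ρ ≤ 2/3 → ρ * |auxh η φ τ ρ| ≤ C₁ * (ρ + Real.sqrt ρ)) :
    HasFDerivAt (auxv η φ i0 i1 τ) (0 : EuclideanSpace ℝ (Fin n) →L[ℝ] ℝ) 0 := by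
  rw [hasFDerivAt_iff_isLittleO_nhds_zero]
  rw [Asymptotics.isLittleO_iff]
  intro cst hcst
  have hq : 0 < cst/(2*(C₁+1)) := by positivity
  set q := cst/(2*(C₁+1)) with hqdef
  have hδ : 0 < min (2/3) (q^2) := by positivity
  filter_upwards [Metric.ball_mem_nhds (0 : EuclideanSpace ℝ (Fin n)) hδ] with y hy
  rw [Metric.mem_ball, dist_zero_right] at hy
  simp only [zero_add, auxv_zero_at_zero, sub_zero, ContinuousLinearMap.zero_apply]
  by_cases h0 : y = 0
  · simp [h0, auxv_zero_at_zero]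
  · have hρ : 0 < ‖y‖ := norm_pos_iff.mpr h0
    have h23 : ‖y‖ ≤ 2/3 := le_of_lt (lt_of_lt_of_le hy (min_le_left _ _))
    have hyq2 : ‖y‖ < q^2 := lt_of_lt_of_le hy (min_le_right _ _)
    have hsq : Real.sqrt ‖y‖ ≤ q := by
      calc Real.sqrt ‖y‖ ≤ Real.sqrt (q^2) := Real.sqrt_le_sqrt hyq2.le
        _ = q := Real.sqrt_sq hq.le
    have hρq : ‖y‖ ≤ q := by
      have h0' : ‖y‖^2 ≤ ‖y‖ := by nlinarith
      have h1 : ‖y‖ ≤ Real.sqrt ‖y‖ := by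
        calc ‖y‖ = Real.sqrt (‖y‖^2) := (Real.sqrt_sq (norm_nonneg y)).symm
          _ ≤ Real.sqrt ‖y‖ := Real.sqrt_le_sqrt h0'
      linarith
    have hvb := hval ‖y‖ hρ h23
    have habs := auxv_abs_le η φ i0 i1 τ y
    have hfin : ‖y‖ * |auxh η φ τ ‖y‖| ≤ cst := by
      have h1 : C₁ * (‖y‖ + Real.sqrt ‖y‖) ≤ C₁ * (2*q) := by
        apply mul_le_mul_of_nonneg_left _ hC₁
        linarith
      have h2 : C₁ * (2*q) ≤ cst := by
        rw [hqdef]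
        rw [div_eq_inv_mul]
        have hpos : (0:ℝ) < C₁ + 1 := by linarith
        rw [show C₁ * (2 * ((2*(C₁+1))⁻¹ * cst)) = (C₁/(C₁+1)) * cst by field_simp]
        have : C₁/(C₁+1) ≤ 1 := by rw [div_le_one hpos]; linarith
        nlinarith
      linarith
    rw [Real.norm_eq_abs]
    calc |auxv η φ i0 i1 τ y| ≤ ‖y‖ * (‖y‖ * |auxh η φ τ ‖y‖|) := habs
      _ ≤ ‖y‖ * cst := mul_le_mul_of_nonneg_left hfin (norm_nonneg y)
      _ = cst * ‖y‖ := mul_comm _ _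
set_option maxHeartbeats 1600000 in
/-- The pieced-together function u(x) = Σ_k ε_k r_k² u_{t_k}((x−R_kζ₀)/r_k) is
twice differentiable at the origin, with all first and second partials 0 there. -/
theorem stmt11 (n : ℕ) (hn : 2 ≤ n) (φ η : ℝ → ℝ)
    (hφsmooth : ContDiffOn ℝ 2 φ (Set.Ioi 0))
    (hφ : Tendsto φ atTop atTop)
    (hφ' : Tendsto (deriv φ) atTop (nhds 0))
    (hφ'' : Tendsto (deriv (deriv φ)) atTop (nhds 0))
    (hηsmooth : ContDiff ℝ (⊤ : ℕ∞) η)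
    (hηmono : AntitoneOn η (Set.Ici 0))
    (hηrange : ∀ s : ℝ, 0 ≤ s → η s ∈ Set.Icc (0:ℝ) 1)
    (hη1 : ∀ s : ℝ, 0 ≤ s → s ≤ 1/2 → η s = 1)
    (hη0 : ∀ s : ℝ, 2/3 ≤ s → η s = 0)
    (U : ℝ → EuclideanSpace ℝ (Fin n) → ℝ)
    (hU : ∀ t : ℝ, ∀ x : EuclideanSpace ℝ (Fin n),
      U t x = if x = 0 ∨ 1 ≤ ‖x‖ then 0
        else η ‖x‖ * x ⟨0, by omega⟩ * x ⟨1, by omega⟩ * ‖x‖ ^ (2 * t)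
              * φ (-Real.log (‖x‖ ^ (2:ℕ))))
    (R r ε t : ℕ → ℝ)
    (hRpos : ∀ k, 0 < R k) (hrpos : ∀ k, 0 < r k)
    (hRanti : StrictAnti R) (hranti : StrictAnti r)
    (hRlim : Tendsto R atTop (nhds 0)) (hrlim : Tendsto r atTop (nhds 0))
    (hRr : ∀ k, r k < R k)
    (hsep : ∀ k, R (k+1) + r (k+1) < R k - r k)
    (hεpos : ∀ k, 0 < ε k) (hεlim : Tendsto ε atTop (nhds 0))
    (ht : ∀ k, t k ∈ Set.Ioo (0:ℝ) (1/4)) (htlim : Tendsto t atTop (nhds 0))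
    (c : ℕ → EuclideanSpace ℝ (Fin n))
    (hc : ∀ k j, c k j = R k / Real.sqrt 2)
    (u : EuclideanSpace ℝ (Fin n) → ℝ)
    (hu : ∀ x : EuclideanSpace ℝ (Fin n),
      u x = ∑' k : ℕ, ε k * r k ^ 2 *
        U (t k) ((r k)⁻¹ • (x - c k))) :
    HasFDerivAt u (0 : EuclideanSpace ℝ (Fin n) →L[ℝ] ℝ) 0 ∧
    ∀ j : Fin n,
      HasFDerivAt (fun x => fderiv ℝ u x (EuclideanSpace.single j 1))
        (0 : EuclideanSpace ℝ (Fin n) →L[ℝ] ℝ) 0 := by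
  have i0 : Fin n := ⟨0, by omega⟩
  have i1 : Fin n := ⟨1, by omega⟩
  -- U agrees with auxv
  have hUv : ∀ τ (y : EuclideanSpace ℝ (Fin n)), U τ y = auxv η φ ⟨0, by omega⟩ ⟨1, by omega⟩ τ y := by
    intro τ y
    rw [hU]
    by_cases h0 : y = 0
    · rw [if_pos (Or.inl h0), h0, auxv_zero_at_zero]
    · by_cases h1 : (1:ℝ) ≤ ‖y‖
      · rw [if_pos (Or.inr h1)]
        unfold auxv auxh
        rw [hη0 ‖y‖ (by linarith)]
        ring
      · rw [if_neg (not_or.mpr ⟨h0, h1⟩)]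
        unfold auxv auxh
        ring
  -- geometry
  have hckub : ∀ k, ‖c k‖ ≤ n * R k := by
    intro k
    have := const_coord_norm_ub (R k) (c k) (fun i => hc k i)
    rwa [abs_of_pos (hRpos k)] at this
  have hcklb : ∀ k, R k ≤ ‖c k‖ := by
    intro k
    have := const_coord_norm_lb hn (R k) (c k) (fun i => hc k i)
    rwa [abs_of_pos (hRpos k)] at this
  have hsep2 : ∀ k m, k < m → R m + r m < R k - r k := by
    intro k m hkm
    induction m, hkm using Nat.le_induction with
    | base => exact hsep k
    | succ m' hm' ih =>
      have h := hsep m'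
      have hr : 0 < r m' := hrpos m'
      linarith
  have hcdist : ∀ k m, k ≠ m → r k + r m < ‖c k - c m‖ := by
    intro k m hkm
    have hcoord : ∀ i, (c k - c m) i = (R k - R m) / Real.sqrt 2 := by
      intro i
      show (c k) i - (c m) i = _
      rw [hc k i, hc m i, sub_div]
    have hlb := const_coord_norm_lb hn (R k - R m) _ hcoord
    rcases lt_or_gt_of_ne hkm with h | h
    · have hs := hsep2 k m h
      have habs : |R k - R m| = R k - R m := abs_of_pos (by linarith [hrpos k, hrpos m])
      rw [habs] at hlb
      linarith
    · have hs := hsep2 m k h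
      have habs : |R k - R m| = R m - R k := by
        rw [abs_of_neg (by linarith [hrpos k, hrpos m])]; ring
      rw [habs] at hlb
      linarith
  have hxnorm : ∀ k (z : EuclideanSpace ℝ (Fin n)), ‖(r k)⁻¹ • (z - c k)‖ = ‖z - c k‖ / r k := by
    intro k z
    rw [norm_smul, Real.norm_eq_abs, abs_inv, abs_of_pos (hrpos k), inv_mul_eq_div]
  obtain ⟨C₁, C₂, hC₁, hC₂, hmain⟩ := auxh_main η φ hφsmooth hφ' hηsmooth hηrange hη0
  have hterm_zero : ∀ k (z : EuclideanSpace ℝ (Fin n)), (2:ℝ)/3 * r k ≤ ‖z - c k‖ →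
      ε k * r k ^ 2 * auxv η φ (⟨0, by omega⟩ : Fin n) ⟨1, by omega⟩ (t k) ((r k)⁻¹ • (z - c k)) = 0 := by
    intro k z hz
    have h23 : (2:ℝ)/3 ≤ ‖(r k)⁻¹ • (z - c k)‖ := by
      rw [hxnorm, le_div_iff₀ (hrpos k)]
      linarith
    unfold auxv
    rw [auxh_zero η φ hη0 _ _ h23]
    ring
  have husum : ∀ z, u z = ∑' k, ε k * r k ^ 2 *
      auxv η φ (⟨0, by omega⟩ : Fin n) ⟨1, by omega⟩ (t k) ((r k)⁻¹ • (z - c k)) := by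
    intro z
    rw [hu z]
    exact tsum_congr fun k => by rw [hUv]
  have hu_single : ∀ k (z : EuclideanSpace ℝ (Fin n)), ‖z - c k‖ < r k →
      u z = ε k * r k ^ 2 * auxv η φ (⟨0, by omega⟩ : Fin n) ⟨1, by omega⟩ (t k) ((r k)⁻¹ • (z - c k)) := by
    intro k z hz
    rw [husum]
    apply tsum_eq_single
    intro m hmk
    apply hterm_zero
    have h1 := hcdist k m (fun h => hmk (h.symm))
    have h2 : ‖c k - c m‖ ≤ ‖z - c m‖ + ‖z - c k‖ := by
      have he : c k - c m = (z - c m) - (z - c k) := by abel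
      rw [he]
      exact norm_sub_le _ _
    have hrm := hrpos m
    linarith
  have hu0 : u 0 = 0 := by
    rw [husum]
    have hterms : ∀ k, ε k * r k ^ 2 *
        auxv η φ (⟨0, by omega⟩ : Fin n) ⟨1, by omega⟩ (t k) ((r k)⁻¹ • ((0:EuclideanSpace ℝ (Fin n)) - c k)) = 0 := by
      intro k
      apply hterm_zero
      have h1 : ‖(0:EuclideanSpace ℝ (Fin n)) - c k‖ = ‖c k‖ := by
        rw [zero_sub, norm_neg]
      rw [h1]
      have := hcklb k
      have := hRr k
      have := hrpos k
      linarith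
    calc (∑' k, ε k * r k ^ 2 *
        auxv η φ (⟨0, by omega⟩ : Fin n) ⟨1, by omega⟩ (t k) ((r k)⁻¹ • ((0:EuclideanSpace ℝ (Fin n)) - c k)))
        = ∑' (k:ℕ), (0:ℝ) := tsum_congr hterms
      _ = 0 := tsum_zero
  -- Part 1
  have part1 : HasFDerivAt u (0 : EuclideanSpace ℝ (Fin n) →L[ℝ] ℝ) 0 := by
    rw [hasFDerivAt_iff_isLittleO_nhds_zero]
    rw [Asymptotics.isLittleO_iff]
    intro cst hcst
    set M : ℝ := 6*C₁*(r 0) + 1 with hMdef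
    have hMpos : 0 < M := by
      have h0 : (0:ℝ) ≤ 6*C₁*(r 0) := mul_nonneg (by linarith) (hrpos 0).le
      linarith
    have hev : ∀ᶠ k in atTop, ε k < cst / M := by
      have h1 := Metric.tendsto_nhds.mp hεlim (cst / M) (div_pos hcst hMpos)
      exact h1.mono fun k hk => by
        rw [Real.dist_eq, sub_zero, abs_of_pos (hεpos k)] at hk
        exact hk
    obtain ⟨K, hK⟩ := eventually_atTop.mp hev
    have hδpos : 0 < R K / 3 := by linarith [hRpos K]
    filter_upwards [Metric.ball_mem_nhds (0 : EuclideanSpace ℝ (Fin n)) hδpos] with x hx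
    rw [Metric.mem_ball, dist_zero_right] at hx
    simp only [zero_add, hu0, sub_zero, ContinuousLinearMap.zero_apply]
    by_cases hex : ∃ k, ‖x - c k‖ ≤ 2/3 * r k
    · obtain ⟨k, hk⟩ := hex
      have hrk := hrpos k
      have hxk : ‖x - c k‖ < r k := lt_of_le_of_lt hk (by linarith)
      rw [hu_single k x hxk]
      have hxlb : R k / 3 ≤ ‖x‖ := by
        have h1 : ‖c k‖ ≤ ‖x‖ + ‖x - c k‖ := by
          calc ‖c k‖ = ‖x - (x - c k)‖ := by rw [sub_sub_cancel]
            _ ≤ ‖x‖ + ‖x - c k‖ := norm_sub_le _ _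
        have h2 := hcklb k
        have h3 := hRr k
        linarith
      have hkK : K ≤ k := by
        by_contra hcon
        push_neg at hcon
        have := hRanti hcon
        linarith
      have hε := hK k hkK
      set y := (r k)⁻¹ • (x - c k) with hydef
      have hρle : ‖y‖ ≤ 2/3 := by
        rw [hydef, hxnorm, div_le_iff₀ (hrpos k)]
        linarith
      have hauxv : |auxv η φ (⟨0, by omega⟩ : Fin n) ⟨1, by omega⟩ (t k) y| ≤ 2*C₁ := by
        by_cases hy0 : y = 0
        · rw [hy0, auxv_zero_at_zero, abs_zero]
          positivity
        · have hρpos : 0 < ‖y‖ := norm_pos_iff.mpr hy0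
          obtain ⟨_, _, hval⟩ := hmain (t k) (ht k) ‖y‖ hρpos
          have h1 := hval hρle
          have h2 := auxv_abs_le η φ (⟨0, by omega⟩ : Fin n) ⟨1, by omega⟩ (t k) y
          have hsq1 : Real.sqrt ‖y‖ ≤ 1 := by
            rw [show (1:ℝ) = Real.sqrt 1 by simp]
            exact Real.sqrt_le_sqrt (by linarith)
          have hsq0 := Real.sqrt_nonneg ‖y‖
          have h3 : ‖y‖*(‖y‖*|auxh η φ (t k) ‖y‖|) ≤ ‖y‖*(C₁*(‖y‖+Real.sqrt ‖y‖)) :=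
            mul_le_mul_of_nonneg_left h1 (norm_nonneg y)
          have h4 : ‖y‖*(C₁*(‖y‖+Real.sqrt ‖y‖)) ≤ (2/3)*(C₁*(2/3+1)) := by
            apply mul_le_mul hρle (mul_le_mul_of_nonneg_left (by linarith) hC₁)
              (by positivity) (by norm_num)
          linarith
      have hrk3 : r k ≤ 3 * ‖x‖ := by
        have := hRr k
        linarith
      have hrk0 : r k ≤ r 0 := hranti.antitone (Nat.zero_le k)
      rw [Real.norm_eq_abs, abs_mul]
      have he1 : |ε k * r k ^ 2| = ε k * r k ^ 2 :=
        abs_of_pos (mul_pos (hεpos k) (pow_pos (hrpos k) 2))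
      rw [he1]
      calc ε k * r k ^ 2 * |auxv η φ (⟨0, by omega⟩ : Fin n) ⟨1, by omega⟩ (t k) y|
          ≤ ε k * r k ^ 2 * (2*C₁) :=
            mul_le_mul_of_nonneg_left hauxv (mul_pos (hεpos k) (pow_pos (hrpos k) 2)).le
        _ ≤ cst * ‖x‖ := by
            have hεnn := (hεpos k).le
            have h1 : ε k * r k ^ 2 * (2*C₁) = (2*C₁*(r k)) * (ε k * r k) := by ring
            have h2 : ε k * r k ≤ ε k * (3*‖x‖) := mul_le_mul_of_nonneg_left hrk3 hεnn
            have h3 : 2*C₁*(r k) ≤ 2*C₁*(r 0) := mul_le_mul_of_nonneg_left hrk0 (by linarith)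
            have h4 : (0:ℝ) ≤ 2*C₁*(r k) := mul_nonneg (by linarith) (hrpos k).le
            have h5 : ε k * r k ^2 * (2*C₁) ≤ (2*C₁*(r 0)) * (ε k * (3*‖x‖)) := by
              rw [h1]
              apply mul_le_mul h3 h2 (mul_nonneg hεnn (hrpos k).le)
                (mul_nonneg (by linarith) (hrpos 0).le)
            have h6 : (2*C₁*(r 0)) * (ε k * (3*‖x‖)) = (6*C₁*(r 0)) * ε k * ‖x‖ := by ring
            have h7 : (6*C₁*(r 0)) * ε k ≤ M * ε k := by
              apply mul_le_mul_of_nonneg_right _ hεnn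
              rw [hMdef]; linarith
            have h8 : M * ε k < M * (cst/M) := mul_lt_mul_of_pos_left hε hMpos
            have h9 : M * (cst/M) = cst := by field_simp
            nlinarith [norm_nonneg x]
    · push_neg at hex
      have hux : u x = 0 := by
        rw [husum]
        calc (∑' k, ε k * r k ^ 2 *
            auxv η φ (⟨0, by omega⟩ : Fin n) ⟨1, by omega⟩ (t k) ((r k)⁻¹ • (x - c k)))
            = ∑' (k:ℕ), (0:ℝ) := tsum_congr fun k => hterm_zero k x (le_of_lt (hex k))
          _ = 0 := tsum_zero
      rw [hux]
      simp only [norm_zero]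
      exact mul_nonneg hcst.le (norm_nonneg x)
  refine ⟨part1, fun j => ?_⟩
  -- Part 2
  have hfderiv0 : fderiv ℝ u 0 = 0 := part1.fderiv
  rw [hasFDerivAt_iff_isLittleO_nhds_zero]
  rw [Asymptotics.isLittleO_iff]
  intro cst hcst
  set Bc : ℝ := C₂ + 4*C₁ with hBcdef
  have hBc : 0 ≤ Bc := by rw [hBcdef]; linarith
  set M : ℝ := 4*Bc + 1 with hMdef
  have hMpos : 0 < M := by rw [hMdef]; linarith
  have hev : ∀ᶠ k in atTop, ε k < cst / M := by
    have h1 := Metric.tendsto_nhds.mp hεlim (cst / M) (div_pos hcst hMpos)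
    exact h1.mono fun k hk => by
      rw [Real.dist_eq, sub_zero, abs_of_pos (hεpos k)] at hk
      exact hk
  obtain ⟨K, hK⟩ := eventually_atTop.mp hev
  have hδpos : 0 < R K / 4 := by linarith [hRpos K]
  filter_upwards [Metric.ball_mem_nhds (0 : EuclideanSpace ℝ (Fin n)) hδpos] with x hx
  rw [Metric.mem_ball, dist_zero_right] at hx
  simp only [zero_add, hfderiv0, ContinuousLinearMap.zero_apply, sub_zero]
  have hkey : ‖fderiv ℝ u x‖ ≤ cst * ‖x‖ → ‖fderiv ℝ u x (EuclideanSpace.single j 1)‖ ≤ cst * ‖x‖ := by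
    intro h
    calc ‖fderiv ℝ u x (EuclideanSpace.single j 1)‖
        ≤ ‖fderiv ℝ u x‖ * ‖EuclideanSpace.single j (1:ℝ)‖ := ContinuousLinearMap.le_opNorm _ _
      _ = ‖fderiv ℝ u x‖ := by rw [EuclideanSpace.norm_single]; simp
      _ ≤ cst * ‖x‖ := h
  apply hkey
  by_cases hex : ∃ k, ‖x - c k‖ < 3/4 * r k
  · obtain ⟨k, hk⟩ := hex
    have hrk := hrpos k
    have hloc : u =ᶠ[nhds x] (fun z => ε k * r k ^ 2 *
        auxv η φ (⟨0, by omega⟩ : Fin n) ⟨1, by omega⟩ (t k) ((r k)⁻¹ • (z - c k))) := by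
      have hxball : x ∈ Metric.ball (c k) (3/4 * r k) := by
        rw [Metric.mem_ball, dist_eq_norm]
        exact hk
      filter_upwards [Metric.isOpen_ball.mem_nhds hxball] with z hz
      rw [Metric.mem_ball, dist_eq_norm] at hz
      exact hu_single k z (by linarith)
    -- lower bound on ‖x‖
    have hxlb : R k / 4 ≤ ‖x‖ := by
      have h1 : ‖c k‖ ≤ ‖x‖ + ‖x - c k‖ := by
        calc ‖c k‖ = ‖x - (x - c k)‖ := by rw [sub_sub_cancel]
          _ ≤ ‖x‖ + ‖x - c k‖ := norm_sub_le _ _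
      have h2 := hcklb k
      have h3 := hRr k
      linarith
    have hkK : K ≤ k := by
      by_contra hcon
      push_neg at hcon
      have := hRanti hcon
      linarith
    have hε := hK k hkK
    have hrk4 : r k ≤ 4 * ‖x‖ := by
      have := hRr k
      linarith
    -- derivative of the local model
    have haff : HasFDerivAt (fun z : EuclideanSpace ℝ (Fin n) => (r k)⁻¹ • (z - c k))
        ((r k)⁻¹ • ContinuousLinearMap.id ℝ (EuclideanSpace ℝ (Fin n))) x :=
      ((hasFDerivAt_id x).sub_const (c k)).const_smul ((r k)⁻¹)
    set y := (r k)⁻¹ • (x - c k) with hydef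
    have hmodel : ∃ D : EuclideanSpace ℝ (Fin n) →L[ℝ] ℝ,
        HasFDerivAt (fun z => ε k * r k ^ 2 *
          auxv η φ (⟨0, by omega⟩ : Fin n) ⟨1, by omega⟩ (t k) ((r k)⁻¹ • (z - c k))) D x ∧
        ‖D‖ ≤ ε k * r k * Bc := by
      have hDv : ∃ Dv : EuclideanSpace ℝ (Fin n) →L[ℝ] ℝ,
          HasFDerivAt (auxv η φ (⟨0, by omega⟩ : Fin n) ⟨1, by omega⟩ (t k)) Dv y ∧ ‖Dv‖ ≤ Bc := by
        by_cases hy0 : y = 0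
        · refine ⟨0, ?_, by simpa using hBc⟩
          rw [hy0]
          exact auxv_hasFDerivAt_zero η φ _ _ (t k) C₁ hC₁
            (fun ρ hρ h23 => (hmain (t k) (ht k) ρ hρ).2.2 h23)
        · exact auxv_hasFDerivAt η φ _ _ (t k) C₁ C₂ hC₁ hC₂
            (hmain (t k) (ht k)) (fun ρ h => auxh_zero η φ hη0 _ ρ h) y hy0
      obtain ⟨Dv, hDv, hDvle⟩ := hDv
      have hcomp := hDv.comp x haff
      have hfinal := hcomp.const_mul (ε k * r k ^ 2)
      refine ⟨_, hfinal, ?_⟩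
      have e0 : ‖(ε k * r k ^ 2) • (Dv.comp ((r k)⁻¹ • ContinuousLinearMap.id ℝ (EuclideanSpace ℝ (Fin n))))‖
          = ‖ε k * r k ^ 2‖ * ‖Dv.comp ((r k)⁻¹ • ContinuousLinearMap.id ℝ (EuclideanSpace ℝ (Fin n)))‖ :=
        norm_smul (ε k * r k ^ 2) (Dv.comp ((r k)⁻¹ • ContinuousLinearMap.id ℝ (EuclideanSpace ℝ (Fin n))))
      rw [e0]
      have e1 : ‖Dv.comp ((r k)⁻¹ • ContinuousLinearMap.id ℝ (EuclideanSpace ℝ (Fin n)))‖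
          ≤ ‖Dv‖ * ‖(r k)⁻¹ • ContinuousLinearMap.id ℝ (EuclideanSpace ℝ (Fin n))‖ :=
        ContinuousLinearMap.opNorm_comp_le _ _
      have e2 : ‖(r k)⁻¹ • ContinuousLinearMap.id ℝ (EuclideanSpace ℝ (Fin n))‖ ≤ (r k)⁻¹ := by
        have e3 : ‖(r k)⁻¹ • ContinuousLinearMap.id ℝ (EuclideanSpace ℝ (Fin n))‖
            = ‖(r k)⁻¹‖ * ‖ContinuousLinearMap.id ℝ (EuclideanSpace ℝ (Fin n))‖ :=
          norm_smul ((r k)⁻¹) (ContinuousLinearMap.id ℝ (EuclideanSpace ℝ (Fin n)))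
        rw [e3, Real.norm_eq_abs, abs_inv, abs_of_pos (hrpos k)]
        have := ContinuousLinearMap.norm_id_le (𝕜 := ℝ) (E := EuclideanSpace ℝ (Fin n))
        have hinv : (0:ℝ) ≤ (r k)⁻¹ := by positivity
        nlinarith
      have e4 : ‖ε k * r k ^2‖ = ε k * r k ^2 := by
        rw [Real.norm_eq_abs, abs_of_pos (mul_pos (hεpos k) (pow_pos (hrpos k) 2))]
      rw [e4]
      have e5 : ‖Dv.comp ((r k)⁻¹ • ContinuousLinearMap.id ℝ (EuclideanSpace ℝ (Fin n)))‖
          ≤ Bc * (r k)⁻¹ :=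
        le_trans e1 (mul_le_mul hDvle e2 (norm_nonneg _) hBc)
      calc ε k * r k ^2 * ‖Dv.comp ((r k)⁻¹ • ContinuousLinearMap.id ℝ (EuclideanSpace ℝ (Fin n)))‖
          ≤ ε k * r k ^2 * (Bc * (r k)⁻¹) :=
            mul_le_mul_of_nonneg_left e5 (mul_pos (hεpos k) (pow_pos (hrpos k) 2)).le
        _ = ε k * r k * Bc := by
            field_simp
    obtain ⟨D, hD, hDle⟩ := hmodel
    rw [hloc.fderiv_eq, hD.fderiv]
    calc ‖D‖ ≤ ε k * r k * Bc := hDle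
      _ ≤ cst * ‖x‖ := by
        have h1 : ε k * r k * Bc ≤ ε k * (4*‖x‖) * Bc := by
          apply mul_le_mul_of_nonneg_right _ hBc
          exact mul_le_mul_of_nonneg_left hrk4 (hεpos k).le
        have h2 : ε k * (4*‖x‖) * Bc = (4*Bc) * ε k * ‖x‖ := by ring
        have h3 : (4*Bc) * ε k ≤ M * ε k := by
          apply mul_le_mul_of_nonneg_right _ (hεpos k).le
          rw [hMdef]; linarith
        have h4 : M * ε k < M * (cst/M) := mul_lt_mul_of_pos_left hε hMpos
        have h5 : M * (cst/M) = cst := by field_simp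
        have h6 : (4*Bc)*ε k*‖x‖ ≤ M*ε k*‖x‖ := mul_le_mul_of_nonneg_right h3 (norm_nonneg x)
        have h7 : M*ε k*‖x‖ ≤ M*(cst/M)*‖x‖ :=
          mul_le_mul_of_nonneg_right h4.le (norm_nonneg x)
        have h8 : M*(cst/M)*‖x‖ = cst*‖x‖ := by rw [h5]
        calc ε k * r k * Bc ≤ ε k * (4*‖x‖) * Bc := h1
          _ = 4*Bc*ε k*‖x‖ := h2
          _ ≤ M*ε k*‖x‖ := h6
          _ ≤ M*(cst/M)*‖x‖ := h7
          _ = cst*‖x‖ := h8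
  · push_neg at hex
    by_cases hx0 : x = 0
    · rw [hx0, hfderiv0]
      simp
    · have hxpos : 0 < ‖x‖ := norm_pos_iff.mpr hx0
      have htend : Tendsto (fun k => (n:ℝ) * R k + r k) atTop (nhds 0) := by
        have := (hRlim.const_mul (n:ℝ)).add hrlim
        simpa using this
      have hev1 : ∀ᶠ k in atTop, (n:ℝ) * R k + r k < ‖x‖/2 :=
        htend.eventually (gt_mem_nhds (by positivity))
      obtain ⟨K₁, hK₁⟩ := eventually_atTop.mp hev1
      have hδx : 0 < min (‖x‖/2) (r K₁ / 12) := by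
        have := hrpos K₁
        positivity
      have hzero : ∀ z ∈ Metric.ball x (min (‖x‖/2) (r K₁ / 12)), u z = 0 := by
        intro z hz
        rw [Metric.mem_ball, dist_eq_norm] at hz
        rw [husum]
        refine (tsum_congr (fun k => hterm_zero k z ?_)).trans tsum_zero
        have htri : ‖x - c k‖ - ‖z - x‖ ≤ ‖z - c k‖ := by
          have h := norm_sub_le (z - c k) (z - x)
          have he : ‖x - c k‖ = ‖(z - c k) - (z - x)‖ := by
            rw [show (z - c k) - (z - x) = x - c k by abel]
          rw [he]
          linarith
        rcases lt_or_ge k K₁ with hkK | hkK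
        · have h2 : r K₁ < r k := hranti hkK
          have h3 := hex k
          have h4 : ‖z - x‖ < r K₁ / 12 := lt_of_lt_of_le hz (min_le_right _ _)
          linarith
        · have h2 := hK₁ k hkK
          have h3 := hckub k
          have h4 : ‖z - x‖ < ‖x‖/2 := lt_of_lt_of_le hz (min_le_left _ _)
          have h5 : ‖x‖ - ‖z - x‖ - ‖c k‖ ≤ ‖z - c k‖ := by
            have h6 : ‖x - c k‖ ≥ ‖x‖ - ‖c k‖ := by
              have := norm_sub_norm_le x (c k)
              have := abs_le.mp (abs_norm_sub_norm_le x (c k))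
              linarith [this.2]
            linarith
          have := hrpos k
          linarith
      have hloc0 : u =ᶠ[nhds x] (fun _ => (0:ℝ)) := by
        filter_upwards [Metric.ball_mem_nhds x hδx] with z hz
        exact hzero z hz
      rw [hloc0.fderiv_eq]
      rw [fderiv_const_apply]
      simp only [Pi.zero_apply, norm_zero]
      exact mul_nonneg hcst.le (norm_nonneg x)
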